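/- arXiv:1012.4927 — 3 statements merged into one kernel-verified Lean document; each statement's English description precedes it below -/
import Mathlib

section
/- If R is accretive, i.e., Re⟨f, Rf⟩ ≥ 0 for all f ∈ dom(R), then for every λ > 0 the operator M(iλ) = B² + λ R + λ² I, with domain dom(B²), has an everywhere defined bounded inverse on H. -/
/-!
On the graph space of `B` (its domain with the graph norm, a Hilbert space since `B` is
self-adjoint, hence closed) the closable operator `R` is bounded by the closed graph theorem, so
`⟪B f, B g⟫ + λ ⟪f, R g⟫ + λ² ⟪f, g⟫` is a bounded form, coercive because `R` is accretive.
Lax–Milgram gives a weak solution `x` of `(B² + λR + λ²) x = u`, and self-adjointness of `B`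
puts `B x` in `dom B`, i.e. `x ∈ dom B²`. Accretivity also gives
`λ² ‖x‖² ≤ Re ⟪x, (B² + λR + λ²) x⟫`, so the inverse has norm at most `λ⁻²`.
-/

open scoped InnerProductSpace

/-- `T − z I` possesses an everywhere defined bounded (two-sided) inverse. -/
def HasBoundedInverseShifted {V : Type*} [NormedAddCommGroup V] [NormedSpace ℂ V]
    (T : V →ₗ.[ℂ] V) (z : ℂ) : Prop :=
  ∃ S : V →L[ℂ] V, (∀ w : V, (S w, w + z • S w) ∈ T.graph) ∧
    ∀ x y : V, (x, y) ∈ T.graph → S (y - z • x) = x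

open RCLike

section

variable {𝕜 E F G : Type*} [RCLike 𝕜]

section Coercive

variable [NormedAddCommGroup E] [InnerProductSpace 𝕜 E]

theorem mul_norm_le_norm_of_mul_norm_sq_le_re_inner {c : ℝ} {x y : E}
    (h : c * ‖x‖ ^ 2 ≤ re ⟪x, y⟫_𝕜) : c * ‖x‖ ≤ ‖y‖ := by
  rcases (norm_nonneg x).eq_or_lt with hx | hx
  · rw [← hx, mul_zero]; exact norm_nonneg y
  · refine le_of_mul_le_mul_right ?_ hx
    calc c * ‖x‖ * ‖x‖ = c * ‖x‖ ^ 2 := by ring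
      _ ≤ ‖x‖ * ‖y‖ := h.trans (re_inner_le_norm x y)
      _ = ‖y‖ * ‖x‖ := mul_comm _ _

theorem ContinuousLinearMap.surjective_of_coercive [CompleteSpace E] (T : E →L[𝕜] E) {c : ℝ}
    (hc : 0 < c) (hT : ∀ v, c * ‖v‖ ^ 2 ≤ re ⟪v, T v⟫_𝕜) : Function.Surjective T := by
  have hanti : AntilipschitzWith (Real.toNNReal c⁻¹) T := by
    refine T.antilipschitz_of_bound fun v => ?_
    rw [Real.coe_toNNReal _ (inv_nonneg.mpr hc.le), ← div_eq_inv_mul, le_div_iff₀' hc]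
    exact mul_norm_le_norm_of_mul_norm_sq_le_re_inner (hT v)
  have hclosed : IsClosed (LinearMap.range (T : E →ₗ[𝕜] E) : Set E) := by
    rw [LinearMap.coe_range]
    exact hanti.isClosed_range T.uniformContinuous
  have := hclosed.completeSpace_coe
  suffices (LinearMap.range (T : E →ₗ[𝕜] E))ᗮ = ⊥ from
    LinearMap.range_eq_top.mp (Submodule.orthogonal_eq_bot_iff.mp this)
  refine (Submodule.eq_bot_iff _).mpr fun w hw => ?_
  have hTw : ⟪w, T w⟫_𝕜 = 0 := (Submodule.mem_orthogonal' _ w).mp hw (T w) ⟨w, rfl⟩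
  have hw0 := hT w
  rw [hTw, map_zero] at hw0
  exact norm_eq_zero.mp (pow_eq_zero_iff two_ne_zero |>.mp
    (le_antisymm (nonpos_of_mul_nonpos_right hw0 hc) (sq_nonneg _)))

end Coercive

theorem hasBoundedInverseShifted_zero_of_bound_of_surjective [NormedAddCommGroup E]
    [NormedSpace ℂ E] {T : E →ₗ.[ℂ] E} {c : ℝ} (hc : 0 < c)
    (hbound : ∀ x : T.domain, c * ‖(x : E)‖ ≤ ‖T x‖) (hsurj : ∀ u, ∃ x : T.domain, T x = u) :
    HasBoundedInverseShifted T 0 := by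
  have hinj : Function.Injective T := by
    refine (injective_iff_map_eq_zero T.toFun).mpr fun x hx => Subtype.ext ?_
    have hx0 := hbound x
    rw [show T x = 0 from hx, norm_zero] at hx0
    exact norm_le_zero_iff.mp (nonpos_of_mul_nonpos_right hx0 hc)
  let e := LinearEquiv.ofBijective T.toFun ⟨hinj, hsurj⟩
  have he : ∀ u, T (e.symm u) = u := e.apply_symm_apply
  have hS : ∀ u, ‖T.domain.subtype (e.symm u)‖ ≤ c⁻¹ * ‖u‖ := fun u => by
    rw [← div_eq_inv_mul, le_div_iff₀' hc]
    have hu := hbound (e.symm u)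
    rwa [he] at hu
  refine ⟨(T.domain.subtype ∘ₗ e.symm.toLinearMap).mkContinuous c⁻¹ hS, fun u => ?_, ?_⟩
  · simp [he]
  · rintro _ _ hxy
    obtain ⟨x, rfl, rfl⟩ := T.mem_graph_iff.mp hxy
    rw [zero_smul, sub_zero]
    exact congrArg Subtype.val (e.symm_apply_apply x)

namespace LinearPMap

section Closable

variable [NormedAddCommGroup E] [NormedSpace 𝕜 E] [NormedAddCommGroup F] [NormedSpace 𝕜 F]

theorem IsClosable.apply_eq_of_mem_closure_graph {f : E →ₗ.[𝕜] F} (hf : f.IsClosable) {x : E}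
    {y : F} (hxy : (x, y) ∈ _root_.closure (f.graph : Set (E × F))) (hx : x ∈ f.domain) :
    f ⟨x, hx⟩ = y := by
  rw [← Submodule.topologicalClosure_coe, hf.graph_closure_eq_closure_graph] at hxy
  exact f.closure.mem_graph_snd_inj (le_graph_of_le f.le_closure (f.mem_graph ⟨x, hx⟩)) hxy rfl

end Closable

section SelfAdjoint

variable [NormedAddCommGroup E] [InnerProductSpace 𝕜 E] [CompleteSpace E] {A : E →ₗ.[𝕜] E}

theorem _root_.IsSelfAdjoint.isFormalAdjoint (hA : IsSelfAdjoint A) : A.IsFormalAdjoint A := by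
  have h := adjoint_isFormalAdjoint hA.dense_domain (T := A)
  rwa [isSelfAdjoint_def.mp hA] at h

theorem _root_.IsSelfAdjoint.exists_apply_eq_of_inner_eq (hA : IsSelfAdjoint A) {v w : E}
    (hvw : ∀ f : A.domain, ⟪w, (f : E)⟫_𝕜 = ⟪v, A f⟫_𝕜) : ∃ hv : v ∈ A.domain, A ⟨v, hv⟩ = w := by
  have h : ∃ hv : v ∈ A†.domain, A† ⟨v, hv⟩ = w :=
    ⟨_, adjoint_apply_eq hA.dense_domain ⟨v, mem_adjoint_domain_of_exists v ⟨w, hvw⟩⟩ hvw⟩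
  rwa [isSelfAdjoint_def.mp hA] at h

end SelfAdjoint

section GraphL2

variable [NormedAddCommGroup E] [InnerProductSpace 𝕜 E] [NormedAddCommGroup F]
  [InnerProductSpace 𝕜 F] (T : E →ₗ.[𝕜] F)

/-- The graph of `T` inside the Hilbert sum `E ⊕ F`; as an inner product space it is the domain
of `T` with the graph inner product `⟪x, y⟫ + ⟪T x, T y⟫`. -/
def graphL2 : Submodule 𝕜 (WithLp 2 (E × F)) :=
  T.graph.comap (WithLp.linearEquiv 2 𝕜 (E × F)).toLinearMap

variable {T}

theorem toLp_mem_graphL2 (x : T.domain) : WithLp.toLp 2 ((x : E), T x) ∈ T.graphL2 :=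
  T.mem_graph x

theorem fst_mem_domain_of_mem_graphL2 (v : T.graphL2) : (v : WithLp 2 (E × F)).fst ∈ T.domain :=
  mem_domain_of_mem_graph v.2

theorem apply_fst_of_mem_graphL2 (v : T.graphL2) :
    T ⟨_, fst_mem_domain_of_mem_graphL2 v⟩ = (v : WithLp 2 (E × F)).snd :=
  T.mem_graph_snd_inj (T.mem_graph _) v.2 rfl

theorem IsClosed.isClosed_graphL2 (hT : T.IsClosed) :
    _root_.IsClosed (T.graphL2 : Set (WithLp 2 (E × F))) :=
  hT.preimage (WithLp.prodContinuousLinearEquiv 2 𝕜 E F).continuous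

/-- By the closed graph theorem, a closable `S` defined on `dom T` is bounded for the graph norm
of the closed operator `T`. -/
theorem IsClosable.exists_clm_graphL2 [CompleteSpace E] [CompleteSpace F] [NormedAddCommGroup G]
    [NormedSpace 𝕜 G] [CompleteSpace G] (hT : T.IsClosed) {S : E →ₗ.[𝕜] G} (hS : S.IsClosable)
    (hdom : T.domain ≤ S.domain) :
    ∃ ρ : T.graphL2 →L[𝕜] G,
      ∀ v, ρ v = S ⟨_, hdom (fst_mem_domain_of_mem_graphL2 v)⟩ := by
  have := hT.isClosed_graphL2.completeSpace_coe
  let ρ : T.graphL2 →ₗ[𝕜] G := S.toFun ∘ₗ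
    ((WithLp.fstₗ 2 𝕜 E F ∘ₗ T.graphL2.subtype).codRestrict S.domain
      fun v => hdom (fst_mem_domain_of_mem_graphL2 v))
  refine ⟨⟨ρ, ρ.continuous_of_seq_closed_graph fun u v y hu hρu => ?_⟩, fun v => rfl⟩
  have hfst : Continuous fun w : T.graphL2 => (w : WithLp 2 (E × F)).fst :=
    (WithLp.continuous_fst 2 E F).comp continuous_subtype_val
  exact (hS.apply_eq_of_mem_closure_graph (mem_closure_of_tendsto
    (((hfst.tendsto v).comp hu).prodMk_nhds hρu) (Filter.Eventually.of_forall fun n =>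
      S.mem_graph ⟨_, hdom (fst_mem_domain_of_mem_graphL2 (u n))⟩)) _).symm

end GraphL2

end LinearPMap

section Pencil

variable [NormedAddCommGroup E] [InnerProductSpace 𝕜 E]

def LinearPMap.IsAccretive (R : E →ₗ.[𝕜] E) : Prop :=
  ∀ f : R.domain, 0 ≤ re ⟪(f : E), R f⟫_𝕜

variable {B R : E →ₗ.[𝕜] E} {l : ℝ}

theorem LinearPMap.IsAccretive.norm_sq_add_sq_mul_norm_sq_le_re (hR : R.IsAccretive)
    (hl : 0 ≤ l) (x : R.domain) (y : E) : ‖y‖ ^ 2 + l ^ 2 * ‖(x : E)‖ ^ 2 ≤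
      re (⟪y, y⟫_𝕜 + (l : 𝕜) * ⟪(x : E), R x⟫_𝕜 + (l : 𝕜) ^ 2 * ⟪(x : E), (x : E)⟫_𝕜) := by
  rw [_root_.map_add, _root_.map_add, ← ofReal_pow, re_ofReal_mul, re_ofReal_mul,
    inner_self_eq_norm_sq, inner_self_eq_norm_sq]
  linarith [mul_nonneg hl (hR x)]

variable [CompleteSpace E]

open LinearPMap (fst_mem_domain_of_mem_graphL2 toLp_mem_graphL2 apply_fst_of_mem_graphL2)

theorem sq_mul_norm_le_norm_pencil (hB : IsSelfAdjoint B) (hdom : B.domain ≤ R.domain)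
    (hR : R.IsAccretive) (hl : 0 ≤ l) (x : B.domain) (hBx : B x ∈ B.domain) :
    l ^ 2 * ‖(x : E)‖ ≤ ‖B ⟨B x, hBx⟩ + (l : 𝕜) • R ⟨x, hdom x.2⟩ + (l : 𝕜) ^ 2 • (x : E)‖ := by
  refine mul_norm_le_norm_of_mul_norm_sq_le_re_inner (𝕜 := 𝕜) ?_
  have h := hR.norm_sq_add_sq_mul_norm_sq_le_re hl ⟨x, hdom x.2⟩ (B x)
  rw [hB.isFormalAdjoint x ⟨B x, hBx⟩] at h
  rw [inner_add_right, inner_add_right, inner_smul_right, inner_smul_right]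
  linarith [sq_nonneg ‖B x‖]

theorem exists_weak_solution_pencil (hB : IsSelfAdjoint B) (hRc : R.IsClosable)
    (hdom : B.domain ≤ R.domain) (hR : R.IsAccretive) (hl : 0 < l) (u : E) :
    ∃ x : B.domain, ∀ f : B.domain, ⟪B f, B x⟫_𝕜 + (l : 𝕜) * ⟪(f : E), R ⟨x, hdom x.2⟩⟫_𝕜
      + (l : 𝕜) ^ 2 * ⟪(f : E), (x : E)⟫_𝕜 = ⟪(f : E), u⟫_𝕜 := by
  have := hB.isClosed.isClosed_graphL2.completeSpace_coe
  obtain ⟨ρ, hρ⟩ := hRc.exists_clm_graphL2 hB.isClosed hdom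
  let π₁ : B.graphL2 →L[𝕜] E := WithLp.fstL 2 𝕜 E E ∘L B.graphL2.subtypeL
  let π₂ : B.graphL2 →L[𝕜] E := WithLp.sndL 2 𝕜 E E ∘L B.graphL2.subtypeL
  -- the Lax–Milgram operator of the form `⟪B f, B g⟫ + l ⟪f, R g⟫ + l² ⟪f, g⟫` on `dom B`
  let L : B.graphL2 →L[𝕜] B.graphL2 := π₂.adjoint ∘L π₂ + (l : 𝕜) • π₁.adjoint ∘L ρ
    + (l : 𝕜) ^ 2 • π₁.adjoint ∘L π₁
  have hL : ∀ v w, ⟪v, L w⟫_𝕜 =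
      ⟪π₂ v, π₂ w⟫_𝕜 + (l : 𝕜) * ⟪π₁ v, ρ w⟫_𝕜 + (l : 𝕜) ^ 2 * ⟪π₁ v, π₁ w⟫_𝕜 := by
    intro v w
    simp only [L, add_apply, smul_apply, ContinuousLinearMap.comp_apply, inner_add_right,
      ContinuousLinearMap.adjoint_inner_right]
    rw [inner_smul_right (E := B.graphL2), inner_smul_right (E := B.graphL2),
      ContinuousLinearMap.adjoint_inner_right, ContinuousLinearMap.adjoint_inner_right]
  have hcoer : ∀ v, min 1 (l ^ 2) * ‖v‖ ^ 2 ≤ re ⟪v, L v⟫_𝕜 := by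
    intro v
    have h : ‖π₂ v‖ ^ 2 + l ^ 2 * ‖π₁ v‖ ^ 2 ≤ re ⟪v, L v⟫_𝕜 := by
      rw [hL, hρ]
      exact hR.norm_sq_add_sq_mul_norm_sq_le_re hl.le
        ⟨_, hdom (fst_mem_domain_of_mem_graphL2 v)⟩ (π₂ v)
    rw [show ‖v‖ ^ 2 = ‖π₁ v‖ ^ 2 + ‖π₂ v‖ ^ 2 from WithLp.prod_norm_sq_eq_of_L2 _]
    have : min 1 (l ^ 2) * ‖π₂ v‖ ^ 2 ≤ ‖π₂ v‖ ^ 2 :=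
      mul_le_of_le_one_left (sq_nonneg _) (min_le_left _ _)
    nlinarith [min_le_right 1 (l ^ 2), sq_nonneg ‖π₁ v‖]
  obtain ⟨w, hw⟩ := L.surjective_of_coercive (lt_min one_pos (pow_pos hl 2)) hcoer (π₁.adjoint u)
  refine ⟨⟨_, fst_mem_domain_of_mem_graphL2 w⟩, fun f => ?_⟩
  have h := congrArg (⟪(⟨_, toLp_mem_graphL2 f⟩ : B.graphL2), ·⟫_𝕜) hw
  rw [hL, hρ, ContinuousLinearMap.adjoint_inner_right] at h
  rw [apply_fst_of_mem_graphL2]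
  exact h

theorem exists_pencil_apply_eq (hB : IsSelfAdjoint B) (hRc : R.IsClosable)
    (hdom : B.domain ≤ R.domain) (hR : R.IsAccretive) (hl : 0 < l) (u : E) :
    ∃ (x : B.domain) (hBx : B x ∈ B.domain),
      B ⟨B x, hBx⟩ + (l : 𝕜) • R ⟨x, hdom x.2⟩ + (l : 𝕜) ^ 2 • (x : E) = u := by
  obtain ⟨x, hx⟩ := exists_weak_solution_pencil hB hRc hdom hR hl u
  have hv : ∀ f : B.domain,
      ⟪u - (l : 𝕜) • R ⟨x, hdom x.2⟩ - (l : 𝕜) ^ 2 • (x : E), (f : E)⟫_𝕜 = ⟪B x, B f⟫_𝕜 := by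
    intro f
    rw [← inner_conj_symm, ← inner_conj_symm (B x)]
    congr 1
    rw [inner_sub_right, inner_sub_right, inner_smul_right, inner_smul_right, ← hx f]
    ring
  obtain ⟨hBx, hBBx⟩ := hB.exists_apply_eq_of_inner_eq hv
  exact ⟨x, hBx, by rw [hBBx]; abel⟩

end Pencil

end

theorem pencil_invertible_on_positive_imaginary_axis_general
    {H : Type*}
    [NormedAddCommGroup H] [InnerProductSpace ℂ H] [CompleteSpace H]
    (B : H →ₗ.[ℂ] H)
    (hBsa : B.adjoint = B)
    (R : H →ₗ.[ℂ] H)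
    (hRclosable : R.IsClosable)
    (hRdom : B.domain ≤ R.domain)
    -- `B² = B ∘ B` with its natural domain:
    (B2 : H →ₗ.[ℂ] H)
    (hB2 : ∀ (x y : H), (x, y) ∈ B2.graph ↔
      ∃ (hx : x ∈ B.domain) (hBx : B ⟨x, hx⟩ ∈ B.domain), B ⟨B ⟨x, hx⟩, hBx⟩ = y)
    -- the pencil `M(z) = B² − i z R − z² I` (so `M(iλ) = B² + λR + λ²I`) on `dom(B²)`:
    (M : ℂ → (H →ₗ.[ℂ] H))
    (hMdom : ∀ z : ℂ, (M z).domain = B2.domain)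
    (hMval : ∀ (z : ℂ) (x : (M z).domain) (hx2 : (x : H) ∈ B2.domain)
      (hxR : (x : H) ∈ R.domain),
      M z x = B2 ⟨(x : H), hx2⟩ - (Complex.I * z) • R ⟨(x : H), hxR⟩ - z ^ 2 • (x : H))
    -- `R` is accretive:
    (haccretive : ∀ f : R.domain, 0 ≤ (⟪(f : H), R f⟫_ℂ).re) :
    ∀ l : ℝ, 0 < l → HasBoundedInverseShifted (M (Complex.I * (l : ℂ))) 0 := by
  intro l hl
  have hB : IsSelfAdjoint B := hBsa
  have hM : ∀ y : (M (Complex.I * l)).domain, ∃ (x : B.domain) (hBx : B x ∈ B.domain),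
      (x : H) = y ∧ M (Complex.I * l) y =
        B ⟨B x, hBx⟩ + (l : ℂ) • R ⟨x, hRdom x.2⟩ + (l : ℂ) ^ 2 • (x : H) := by
    intro y
    have hy : (y : H) ∈ B2.domain := hMdom _ ▸ y.2
    obtain ⟨hx, hBx, hBBx⟩ := (hB2 _ _).mp (B2.mem_graph ⟨y, hy⟩)
    refine ⟨⟨y, hx⟩, hBx, rfl, ?_⟩
    rw [hMval _ y hy (hRdom hx), hBBx, ← mul_assoc, Complex.I_mul_I, mul_pow, Complex.I_sq]
    simp only [neg_one_mul, neg_smul, sub_neg_eq_add]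
  refine hasBoundedInverseShifted_zero_of_bound_of_surjective (pow_pos hl 2)
    (fun y => ?_) (fun u => ?_)
  · obtain ⟨x, hBx, hxy, hMy⟩ := hM y
    rw [hMy, ← hxy]
    exact sq_mul_norm_le_norm_pencil hB hRdom haccretive hl.le x hBx
  · obtain ⟨x, hBx, hu⟩ := exists_pencil_apply_eq hB hRclosable hRdom haccretive hl u
    have hx2 : (x : H) ∈ B2.domain :=
      LinearPMap.mem_domain_of_mem_graph ((hB2 _ _).mpr ⟨x.2, hBx, rfl⟩)
    obtain ⟨x', _, hxx', hMx⟩ := hM ⟨x, (hMdom _).symm ▸ hx2⟩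
    obtain rfl : x' = x := Subtype.ext hxx'
    exact ⟨_, hMx.trans hu⟩

/-- from the proof of Theorem 5.3. Let `B` be self-adjoint in `H` with
`ker(B) = {0}` and `R` densely defined closable with `dom(R) ∩ dom(R*) ⊇ dom(B)`.
If `R` is accretive, i.e. `Re⟪f, Rf⟫ ≥ 0` for all `f ∈ dom(R)`, then for every `λ > 0` the
operator `M(iλ) = B² + λR + λ²I`, with domain `dom(B²)`, has an everywhere defined bounded
inverse on `H`. -/
theorem pencil_invertible_on_positive_imaginary_axis
    {H : Type*}
    [NormedAddCommGroup H] [InnerProductSpace ℂ H] [CompleteSpace H]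
    [TopologicalSpace.SeparableSpace H]
    (B : H →ₗ.[ℂ] H)
    (hBdense : Dense (B.domain : Set H))
    (hBsa : B.adjoint = B)
    (hBker : ∀ f : B.domain, B f = 0 → (f : H) = 0)
    (R : H →ₗ.[ℂ] H)
    (hRdense : Dense (R.domain : Set H))
    (hRclosable : R.IsClosable)
    (hRdom : B.domain ≤ R.domain)
    (hRstardom : B.domain ≤ R.adjoint.domain)
    -- `B² = B ∘ B` with its natural domain:
    (B2 : H →ₗ.[ℂ] H)
    (hB2 : ∀ (x y : H), (x, y) ∈ B2.graph ↔
      ∃ (hx : x ∈ B.domain) (hBx : B ⟨x, hx⟩ ∈ B.domain), B ⟨B ⟨x, hx⟩, hBx⟩ = y)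
    -- the pencil `M(z) = B² − i z R − z² I` (so `M(iλ) = B² + λR + λ²I`) on `dom(B²)`:
    (M : ℂ → (H →ₗ.[ℂ] H))
    (hMdom : ∀ z : ℂ, (M z).domain = B2.domain)
    (hMval : ∀ (z : ℂ) (x : (M z).domain) (hx2 : (x : H) ∈ B2.domain)
      (hxR : (x : H) ∈ R.domain),
      M z x = B2 ⟨(x : H), hx2⟩ - (Complex.I * z) • R ⟨(x : H), hxR⟩ - z ^ 2 • (x : H))
    -- `R` is accretive:
    (haccretive : ∀ f : R.domain, 0 ≤ (⟪(f : H), R f⟫_ℂ).re) :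
    ∀ l : ℝ, 0 < l → HasBoundedInverseShifted (M (Complex.I * (l : ℂ))) 0 :=
  pencil_invertible_on_positive_imaginary_axis_general B hBsa R hRclosable hRdom B2 hB2 M hMdom
    hMval haccretive
end

section
/- Suppose there exist constants 0 ≤ a < 1 and b ≥ 0 such that ‖Rf‖ ≤ a‖Bf‖ + b‖f‖ for all f ∈ dom(B). Then there exists Λ > 0 such that for all λ ≥ Λ the operator M(iλ) = B² + λ R + λ² I, with domain dom(B²), has an everywhere defined bounded inverse on H. -/
/-!
For `λ > 0` the operator `B² + λ²` has a bounded inverse `G`: it is onto by von Neumann's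
argument (decompose `(λ⁻¹ h, 0)` along the closed graph of `λ⁻¹ B` in `H ⊕ H` and its orthogonal
complement, which is a rotated copy of the graph of `B* = B`), and the identity
`‖(B² + λ²) x‖² = ‖B² x‖² + 2 λ² ‖B x‖² + λ⁴ ‖x‖²` gives `‖G‖ ≤ λ⁻²` and `‖B G‖ ≤ λ⁻¹`.
The relative bound then yields `‖λ R G‖ ≤ a + b / λ < 1` for large `λ`, so
`M(iλ) = (1 + λ R G) (B² + λ²)` is inverted by `G (1 + λ R G)⁻¹` (Neumann series).
-/

open scoped InnerProductSpace

namespace LinearPMap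

section Normed

variable {𝕜 E F : Type*} [NontriviallyNormedField 𝕜] [NormedAddCommGroup E] [NormedSpace 𝕜 E]
  [NormedAddCommGroup F] [NormedSpace 𝕜 F]

theorem exists_continuousLinearMap_graph_iff_of_surjective (T : E →ₗ.[𝕜] F)
    (hsurj : Function.Surjective T) (C : ℝ) (hC : ∀ x : T.domain, ‖(x : E)‖ ≤ C * ‖T x‖) :
    ∃ S : F →L[𝕜] E, ∀ x y, (x, y) ∈ T.graph ↔ S y = x := by
  have hinj : Function.Injective T := by
    refine (injective_iff_map_eq_zero T.toFun).mpr fun x hx => Subtype.ext ?_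
    simpa [show T x = 0 from hx] using hC x
  let e := LinearEquiv.ofBijective T.toFun ⟨hinj, hsurj⟩
  let S : F →L[𝕜] E := (T.domain.subtype ∘ₗ e.symm.toLinearMap).mkContinuous C fun y =>
    (hC (e.symm y)).trans_eq (by rw [show T (e.symm y) = y from e.apply_symm_apply y])
  refine ⟨S, fun x y => ⟨fun h => ?_, fun h => ?_⟩⟩
  · obtain ⟨x', rfl, rfl⟩ := T.mem_graph_iff.mp h
    exact congrArg Subtype.val (e.symm_apply_apply x')
  · exact T.mem_graph_iff.mpr ⟨e.symm y, h, e.apply_symm_apply y⟩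

theorem exists_continuousLinearMap_mem_graph_comp {G : Type*} [NormedAddCommGroup G]
    [NormedSpace 𝕜 G] (P : E →ₗ.[𝕜] F) (S : G →L[𝕜] E) (hS : ∀ u, S u ∈ P.domain) {C : ℝ}
    (hC0 : 0 ≤ C) (hC : ∀ u, ‖P ⟨S u, hS u⟩‖ ≤ C * ‖u‖) :
    ∃ K : G →L[𝕜] F, (∀ u, (S u, K u) ∈ P.graph) ∧ ‖K‖ ≤ C :=
  ⟨(P.toFun ∘ₗ (S : G →ₗ[𝕜] E).codRestrict P.domain hS).mkContinuous C hC,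
    fun u => P.mem_graph ⟨S u, hS u⟩, LinearMap.mkContinuous_norm_le _ hC0 _⟩

end Normed

theorem mem_graph_vadd_iff {R E F : Type*} [Ring R] [AddCommGroup E] [Module R E]
    [AddCommGroup F] [Module R F] (f : E →ₗ[R] F) (g : E →ₗ.[R] F) {x : E} {y : F} :
    (x, y) ∈ (f +ᵥ g).graph ↔ (x, y - f x) ∈ g.graph := by
  simp only [mem_graph_iff, vadd_apply]
  constructor
  · rintro ⟨x', rfl, rfl⟩
    exact ⟨x', rfl, by simp⟩
  · rintro ⟨x', rfl, h⟩
    exact ⟨x', rfl, by rw [h, add_sub_cancel]⟩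

theorem mem_graph_add_iff {R E F : Type*} [Ring R] [AddCommGroup E] [Module R E]
    [AddCommGroup F] [Module R F] (f g : E →ₗ.[R] F) {x : E} {y : F} :
    (x, y) ∈ (f + g).graph ↔ ∃ z w, (x, z) ∈ f.graph ∧ (x, w) ∈ g.graph ∧ z + w = y := by
  constructor
  · rintro h
    obtain ⟨x', rfl, rfl⟩ := (f + g).mem_graph_iff.mp h
    exact ⟨_, _, f.mem_graph ⟨x', x'.2.1⟩, g.mem_graph ⟨x', x'.2.2⟩, (add_apply f g x').symm⟩
  · rintro ⟨z, w, hz, hw, rfl⟩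
    have hf := mem_domain_of_mem_graph hz
    have hg := mem_domain_of_mem_graph hw
    rw [(image_iff hf).mpr hz, (image_iff hg).mpr hw]
    exact (f + g).mem_graph ⟨x, hf, hg⟩

theorem mem_graph_smul_id_vadd_iff {R E : Type*} [CommRing R] [AddCommGroup E] [Module R E]
    {A A2 : E →ₗ.[R] E} (hA2 : ∀ x y, (x, y) ∈ A2.graph ↔
      ∃ (hx : x ∈ A.domain) (hAx : A ⟨x, hx⟩ ∈ A.domain), A ⟨A ⟨x, hx⟩, hAx⟩ = y)
    (c : R) {x y : E} :
    (x, y) ∈ ((c • LinearMap.id : E →ₗ[R] E) +ᵥ A2).graph ↔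
      ∃ (hx : x ∈ A.domain) (hAx : A ⟨x, hx⟩ ∈ A.domain), A ⟨A ⟨x, hx⟩, hAx⟩ + c • x = y := by
  simp only [mem_graph_vadd_iff, hA2, LinearMap.smul_apply, LinearMap.id_apply,
    eq_sub_iff_add_eq]

theorem eq_vadd_add_smul {R E : Type*} [CommRing R] [AddCommGroup E] [Module R E]
    {A2 P N : E →ₗ.[R] E} (hdom : N.domain = A2.domain) (hA2P : A2.domain ≤ P.domain) (c d : R)
    (hN : ∀ (x : N.domain) (hx2 : (x : E) ∈ A2.domain) (hxP : (x : E) ∈ P.domain),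
      N x = A2 ⟨x, hx2⟩ + d • P ⟨x, hxP⟩ + c • (x : E)) :
    N = ((c • LinearMap.id : E →ₗ[R] E) +ᵥ A2) + d • P := by
  refine ext (by rw [hdom]; exact (inf_eq_left.mpr hA2P).symm) fun x hx hx' => ?_
  obtain ⟨hx2, hxP⟩ := Submodule.mem_inf.mp hx'
  rw [hN ⟨x, hx⟩ hx2 hxP, add_apply, vadd_apply, smul_apply, LinearMap.smul_apply,
    LinearMap.id_apply]
  abel

end LinearPMap

theorem hasBoundedInverseShifted_zero_of_graph_iff {V : Type*} [NormedAddCommGroup V]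
    [NormedSpace ℂ V] (M : V →ₗ.[ℂ] V) (G : V →L[ℂ] V) (U : V ≃L[ℂ] V)
    (hM : ∀ x y, (x, y) ∈ M.graph ↔ ∃ v, G v = x ∧ U v = y) :
    HasBoundedInverseShifted M 0 := by
  refine ⟨G ∘L (U.symm : V →L[ℂ] V), fun w => ?_, fun x y hxy => ?_⟩
  · rw [zero_smul, add_zero, hM]
    exact ⟨_, rfl, U.apply_symm_apply w⟩
  · obtain ⟨v, rfl, rfl⟩ := (hM x y).mp hxy
    simp

theorem hasBoundedInverseShifted_zero_add {V : Type*} [NormedAddCommGroup V] [NormedSpace ℂ V]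
    [CompleteSpace V] (T P : V →ₗ.[ℂ] V) (S : V →L[ℂ] V)
    (hS : ∀ x y, (x, y) ∈ T.graph ↔ S y = x) (K : V →L[ℂ] V) (hK : ∀ u, (S u, K u) ∈ P.graph)
    (hKnorm : ‖K‖ < 1) : HasBoundedInverseShifted (T + P) 0 := by
  let U : V ≃L[ℂ] V :=
    ContinuousLinearEquiv.unitsEquiv ℂ V (Units.oneSub (-K) (by rwa [norm_neg]))
  have hU (v : V) : U v = v + K v := by simp [U, Units.oneSub]
  refine hasBoundedInverseShifted_zero_of_graph_iff _ S U fun x y => ?_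
  simp only [hU, LinearPMap.mem_graph_add_iff]
  constructor
  · rintro ⟨z, w, hz, hw, rfl⟩
    obtain rfl := (hS x z).mp hz
    exact ⟨z, rfl, by rw [P.mem_graph_snd_inj hw (hK z) rfl]⟩
  · rintro ⟨v, rfl, rfl⟩
    exact ⟨v, K v, (hS _ _).mpr rfl, hK v, rfl⟩

namespace IsSelfAdjoint

variable {𝕜 H : Type*} [RCLike 𝕜] [NormedAddCommGroup H] [InnerProductSpace 𝕜 H] [CompleteSpace H]
  {A : H →ₗ.[𝕜] H}

theorem isFormalAdjoint_self (hA : IsSelfAdjoint A) : A.IsFormalAdjoint A := by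
  have h := LinearPMap.adjoint_isFormalAdjoint hA.dense_domain (T := A)
  rwa [LinearPMap.isSelfAdjoint_def.mp hA] at h

theorem mem_graph_of_inner_eq (hA : IsSelfAdjoint A) {x y : H}
    (h : ∀ v : A.domain, ⟪y, (v : H)⟫_𝕜 = ⟪x, A v⟫_𝕜) : (x, y) ∈ A.graph := by
  rw [← LinearPMap.isSelfAdjoint_def.mp hA]
  exact A.adjoint.mem_graph_iff.mpr ⟨⟨x, LinearPMap.mem_adjoint_domain_of_exists x ⟨y, h⟩⟩, rfl,
    LinearPMap.adjoint_apply_eq hA.dense_domain _ h⟩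

theorem re_inner_map_map_self (hA : IsSelfAdjoint A) {x : H} (hx : x ∈ A.domain)
    (hAx : A ⟨x, hx⟩ ∈ A.domain) : RCLike.re ⟪A ⟨A ⟨x, hx⟩, hAx⟩, x⟫_𝕜 = ‖A ⟨x, hx⟩‖ ^ 2 := by
  rw [hA.isFormalAdjoint_self ⟨_, hAx⟩ ⟨x, hx⟩, inner_self_eq_norm_sq]

theorem norm_map_map_add_sq (hA : IsSelfAdjoint A) (l : ℝ) {x : H} (hx : x ∈ A.domain)
    (hAx : A ⟨x, hx⟩ ∈ A.domain) :
    ‖A ⟨A ⟨x, hx⟩, hAx⟩ + (l : 𝕜) ^ 2 • x‖ ^ 2 =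
      ‖A ⟨A ⟨x, hx⟩, hAx⟩‖ ^ 2 + 2 * l ^ 2 * ‖A ⟨x, hx⟩‖ ^ 2 + (l ^ 2 * ‖x‖) ^ 2 := by
  have hl : (l : 𝕜) ^ 2 = ((l ^ 2 : ℝ) : 𝕜) := by push_cast; rfl
  rw [norm_add_sq (𝕜 := 𝕜), hl, inner_smul_right, RCLike.re_ofReal_mul, hA.re_inner_map_map_self,
    norm_smul, RCLike.norm_ofReal, abs_of_nonneg (sq_nonneg l)]
  ring

theorem sq_mul_norm_le_norm_map_map_add (hA : IsSelfAdjoint A) (l : ℝ) {x : H}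
    (hx : x ∈ A.domain) (hAx : A ⟨x, hx⟩ ∈ A.domain) :
    l ^ 2 * ‖x‖ ≤ ‖A ⟨A ⟨x, hx⟩, hAx⟩ + (l : 𝕜) ^ 2 • x‖ := by
  refine abs_le_of_sq_le_sq' ?_ (norm_nonneg _) |>.2
  rw [hA.norm_map_map_add_sq]
  nlinarith [sq_nonneg ‖A ⟨A ⟨x, hx⟩, hAx⟩‖, sq_nonneg (l * ‖A ⟨x, hx⟩‖)]

theorem mul_norm_map_le_norm_map_map_add (hA : IsSelfAdjoint A) (l : ℝ) {x : H}
    (hx : x ∈ A.domain) (hAx : A ⟨x, hx⟩ ∈ A.domain) :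
    l * ‖A ⟨x, hx⟩‖ ≤ ‖A ⟨A ⟨x, hx⟩, hAx⟩ + (l : 𝕜) ^ 2 • x‖ := by
  refine abs_le_of_sq_le_sq' ?_ (norm_nonneg _) |>.2
  rw [hA.norm_map_map_add_sq]
  nlinarith [sq_nonneg ‖A ⟨A ⟨x, hx⟩, hAx⟩‖, sq_nonneg (l * ‖A ⟨x, hx⟩‖), sq_nonneg (l ^ 2 * ‖x‖)]

theorem exists_map_map_add_eq (hA : IsSelfAdjoint A) {l : ℝ} (hl : l ≠ 0) (y : H) :
    ∃ (x : H) (hx : x ∈ A.domain) (hAx : A ⟨x, hx⟩ ∈ A.domain),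
      A ⟨A ⟨x, hx⟩, hAx⟩ + (l : 𝕜) ^ 2 • x = y := by
  have hl' : (l : 𝕜) ≠ 0 := RCLike.ofReal_ne_zero.mpr hl
  -- the graph of `l⁻¹ A`, as a closed subspace of the Hilbert space `H ⊕ H`
  let K : Submodule 𝕜 (WithLp 2 (H × H)) := A.graph.comap
    (((l : 𝕜)⁻¹ • LinearMap.id).prodMap LinearMap.id ∘ₗ
      (WithLp.linearEquiv 2 𝕜 (H × H)).toLinearMap)
  have hK : IsClosed (K : Set (WithLp 2 (H × H))) :=
    hA.isClosed.preimage <| (((WithLp.prod_continuous_ofLp 2 H H).fst.const_smul _).prodMk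
      (WithLp.prod_continuous_ofLp 2 H H).snd)
  have : CompleteSpace K := hK.completeSpace_coe
  obtain ⟨p, hp, q, hq, hpq⟩ := K.exists_add_mem_mem_orthogonal (WithLp.toLp 2 ((l : 𝕜)⁻¹ • y, 0))
  obtain ⟨x, hx, hAx⟩ := A.mem_graph_iff.mp hp
  have hq_orth : ∀ v : A.domain, ⟪-((l : 𝕜) • q.ofLp.1), (v : H)⟫_𝕜 = ⟪q.ofLp.2, A v⟫_𝕜 := by
    intro v
    have hv : WithLp.toLp 2 ((l : 𝕜) • (v : H), A v) ∈ K := by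
      show ((l : 𝕜)⁻¹ • (l : 𝕜) • (v : H), A v) ∈ A.graph
      rw [smul_smul, inv_mul_cancel₀ hl', one_smul]
      exact A.mem_graph v
    have h := K.inner_left_of_mem_orthogonal hv hq
    simp only [WithLp.prod_inner_apply, inner_smul_right] at h
    rw [inner_neg_left, inner_smul_left, RCLike.conj_ofReal]
    linear_combination -h
  have hgraph := A.graph.neg_mem (hA.mem_graph_of_inner_eq hq_orth)
  have h1 : (l : 𝕜)⁻¹ • y = p.ofLp.1 + q.ofLp.1 := congrArg (fun w => w.ofLp.1) hpq
  have h2 : 0 = p.ofLp.2 + q.ofLp.2 := congrArg (fun w => w.ofLp.2) hpq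
  have hp1 : p.ofLp.1 = (l : 𝕜) • (x : H) := by
    rw [show (x : H) = (l : 𝕜)⁻¹ • p.ofLp.1 from hx, smul_smul, mul_inv_cancel₀ hl', one_smul]
  have hq : -(q.ofLp.2, -((l : 𝕜) • q.ofLp.1)) = ((A x : H), y - (l : 𝕜) ^ 2 • (x : H)) := by
    have hq1 : q.ofLp.1 = (l : 𝕜)⁻¹ • y - p.ofLp.1 := eq_sub_of_add_eq' h1.symm
    have hq2 : q.ofLp.2 = -p.ofLp.2 := eq_neg_of_add_eq_zero_right h2.symm
    rw [hq2, hq1, hp1, show p.ofLp.2 = A x from hAx.symm]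
    simp [smul_sub, smul_smul, mul_inv_cancel₀ hl', sq]
  rw [hq] at hgraph
  exact ⟨x, x.2, A.mem_domain_of_mem_graph hgraph,
    by rw [← (A.image_iff _).mpr hgraph, sub_add_cancel]⟩

theorem mul_norm_le_of_relBound (hA : IsSelfAdjoint A) (R : H →ₗ.[𝕜] H)
    (hRdom : A.domain ≤ R.domain) {a b : ℝ} (ha0 : 0 ≤ a) (hb : 0 ≤ b) {l : ℝ} (hl : 0 < l)
    {x : H} (hx : x ∈ A.domain) (hAx : A ⟨x, hx⟩ ∈ A.domain)
    (hRx : ‖R ⟨x, hRdom hx⟩‖ ≤ a * ‖A ⟨x, hx⟩‖ + b * ‖x‖) :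
    l * ‖R ⟨x, hRdom hx⟩‖ ≤ (a + b / l) * ‖A ⟨A ⟨x, hx⟩, hAx⟩ + (l : 𝕜) ^ 2 • x‖ := by
  have hAx_le := hA.mul_norm_map_le_norm_map_map_add l hx hAx
  have hx_le := hA.sq_mul_norm_le_norm_map_map_add l hx hAx
  calc l * ‖R ⟨x, hRdom hx⟩‖
      ≤ a * (l * ‖A ⟨x, hx⟩‖) + b / l * (l ^ 2 * ‖x‖) := by
        rw [div_mul_eq_mul_div, mul_div_assoc, sq, mul_assoc, mul_div_cancel_left₀ _ hl.ne']
        nlinarith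
    _ ≤ (a + b / l) * ‖A ⟨A ⟨x, hx⟩, hAx⟩ + (l : 𝕜) ^ 2 • x‖ := by
        rw [add_mul]
        gcongr

variable {A2 : H →ₗ.[𝕜] H}

theorem exists_continuousLinearMap_graph_iff_sq_add (hA : IsSelfAdjoint A)
    (hA2 : ∀ x y, (x, y) ∈ A2.graph ↔
      ∃ (hx : x ∈ A.domain) (hAx : A ⟨x, hx⟩ ∈ A.domain), A ⟨A ⟨x, hx⟩, hAx⟩ = y)
    {l : ℝ} (hl : l ≠ 0) :
    ∃ S : H →L[𝕜] H,
      ∀ x y, (x, y) ∈ (((l : 𝕜) ^ 2 • LinearMap.id : H →ₗ[𝕜] H) +ᵥ A2).graph ↔ S y = x := by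
  refine LinearPMap.exists_continuousLinearMap_graph_iff_of_surjective _ (fun y => ?_)
    (l ^ 2)⁻¹ fun x => ?_
  · obtain ⟨x, hx, hAx, h⟩ := hA.exists_map_map_add_eq hl y
    obtain ⟨x', -, hx'⟩ := (LinearPMap.mem_graph_iff _).mp
      ((LinearPMap.mem_graph_smul_id_vadd_iff hA2 _).mpr ⟨hx, hAx, h⟩)
    exact ⟨x', hx'⟩
  · obtain ⟨hx, hAx, h⟩ :=
      (LinearPMap.mem_graph_smul_id_vadd_iff hA2 _).mp (LinearPMap.mem_graph _ x)
    rw [← h, inv_mul_eq_div, le_div_iff₀ (by positivity), mul_comm]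
    exact hA.sq_mul_norm_le_norm_map_map_add l hx hAx

end IsSelfAdjoint

theorem pencil_invertible_for_large_lambda_of_relative_bound_general
    {H : Type*}
    [NormedAddCommGroup H] [InnerProductSpace ℂ H] [CompleteSpace H]
    (B : H →ₗ.[ℂ] H)
    (hBsa : B.adjoint = B)
    (R : H →ₗ.[ℂ] H)
    (hRdom : B.domain ≤ R.domain)
    -- `B² = B ∘ B` with its natural domain:
    (B2 : H →ₗ.[ℂ] H)
    (hB2 : ∀ (x y : H), (x, y) ∈ B2.graph ↔
      ∃ (hx : x ∈ B.domain) (hBx : B ⟨x, hx⟩ ∈ B.domain), B ⟨B ⟨x, hx⟩, hBx⟩ = y)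
    -- the pencil `M(z) = B² − i z R − z² I` (so `M(iλ) = B² + λR + λ²I`) on `dom(B²)`:
    (M : ℂ → (H →ₗ.[ℂ] H))
    (hMdom : ∀ z : ℂ, (M z).domain = B2.domain)
    (hMval : ∀ (z : ℂ) (x : (M z).domain) (hx2 : (x : H) ∈ B2.domain)
      (hxR : (x : H) ∈ R.domain),
      M z x = B2 ⟨(x : H), hx2⟩ - (Complex.I * z) • R ⟨(x : H), hxR⟩ - z ^ 2 • (x : H))
    -- `R` is `B`-bounded with relative bound `a < 1`:
    (a b : ℝ) (ha0 : 0 ≤ a) (ha1 : a < 1) (hb : 0 ≤ b)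
    (hbound : ∀ (f : H) (hf : f ∈ B.domain),
      ‖R ⟨f, hRdom hf⟩‖ ≤ a * ‖B ⟨f, hf⟩‖ + b * ‖f‖) :
    ∃ Λ : ℝ, 0 < Λ ∧ ∀ l : ℝ, Λ ≤ l →
      HasBoundedInverseShifted (M (Complex.I * (l : ℂ))) 0 := by
  have hB : IsSelfAdjoint B := hBsa
  have ha : 0 < 1 - a := sub_pos.mpr ha1
  refine ⟨(b + 1) / (1 - a), by positivity, fun l hl => ?_⟩
  have hl0 : 0 < l := lt_of_lt_of_le (by positivity) hl
  have hsmall : a + b / l < 1 := by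
    have := (div_le_iff₀ ha).mp hl
    rw [← lt_sub_iff_add_lt', div_lt_iff₀ hl0]
    linarith
  let T : H →ₗ.[ℂ] H := ((l : ℂ) ^ 2 • LinearMap.id : H →ₗ[ℂ] H) +ᵥ B2
  obtain ⟨S, hS⟩ := hB.exists_continuousLinearMap_graph_iff_sq_add hB2 hl0.ne'
  have hSdom (u : H) := (LinearPMap.mem_graph_smul_id_vadd_iff hB2 _).mp ((hS (S u) u).mpr rfl)
  obtain ⟨K, hK, hKnorm⟩ := ((l : ℂ) • R).exists_continuousLinearMap_mem_graph_comp S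
    (C := a + b / l) (fun u => hRdom (hSdom u).1) (by positivity) fun u => by
      obtain ⟨hx, hBx, hu⟩ := hSdom u
      rw [LinearPMap.smul_apply, norm_smul, Complex.norm_real, Real.norm_of_nonneg hl0.le]
      exact (hB.mul_norm_le_of_relBound R hRdom ha0 hb hl0 hx hBx (hbound _ hx)).trans_eq
        (by rw [hu])
  have hB2R : B2.domain ≤ R.domain := fun x hx =>
    hRdom ((hB2 x _).mp (B2.mem_graph ⟨x, hx⟩)).1
  have hM : M (Complex.I * l) = T + (l : ℂ) • R := by
    refine LinearPMap.eq_vadd_add_smul (hMdom _) hB2R _ _ fun x hx2 hxR => ?_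
    rw [hMval _ x hx2 hxR, ← mul_assoc, Complex.I_mul_I, mul_pow, Complex.I_sq]
    module
  rw [hM]
  exact hasBoundedInverseShifted_zero_add T _ S hS K hK (hKnorm.trans_lt hsmall)

/-- Remark 5.4 (iii). Let `B` be a self-adjoint nonnegative operator in `H`
with `ker(B) = {0}` and `R` densely defined closable with `dom(R) ⊇ dom(B)`.  Suppose there
are constants `0 ≤ a < 1` and `b ≥ 0` with `‖Rf‖ ≤ a‖Bf‖ + b‖f‖` for all `f ∈ dom(B)`.
Then there exists `Λ > 0` such that for all `λ ≥ Λ` the operator `M(iλ) = B² + λR + λ²I`,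
with domain `dom(B²)`, has an everywhere defined bounded inverse on `H`. -/
theorem pencil_invertible_for_large_lambda_of_relative_bound
    {H : Type*}
    [NormedAddCommGroup H] [InnerProductSpace ℂ H] [CompleteSpace H]
    [TopologicalSpace.SeparableSpace H]
    (B : H →ₗ.[ℂ] H)
    (hBdense : Dense (B.domain : Set H))
    (hBsa : B.adjoint = B)
    (hBker : ∀ f : B.domain, B f = 0 → (f : H) = 0)
    (hBnonneg : ∀ f : B.domain, 0 ≤ (⟪(f : H), B f⟫_ℂ).re)
    (R : H →ₗ.[ℂ] H)
    (hRdense : Dense (R.domain : Set H))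
    (hRclosable : R.IsClosable)
    (hRdom : B.domain ≤ R.domain)
    -- `B² = B ∘ B` with its natural domain:
    (B2 : H →ₗ.[ℂ] H)
    (hB2 : ∀ (x y : H), (x, y) ∈ B2.graph ↔
      ∃ (hx : x ∈ B.domain) (hBx : B ⟨x, hx⟩ ∈ B.domain), B ⟨B ⟨x, hx⟩, hBx⟩ = y)
    -- the pencil `M(z) = B² − i z R − z² I` (so `M(iλ) = B² + λR + λ²I`) on `dom(B²)`:
    (M : ℂ → (H →ₗ.[ℂ] H))
    (hMdom : ∀ z : ℂ, (M z).domain = B2.domain)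
    (hMval : ∀ (z : ℂ) (x : (M z).domain) (hx2 : (x : H) ∈ B2.domain)
      (hxR : (x : H) ∈ R.domain),
      M z x = B2 ⟨(x : H), hx2⟩ - (Complex.I * z) • R ⟨(x : H), hxR⟩ - z ^ 2 • (x : H))
    -- `R` is `B`-bounded with relative bound `a < 1`:
    (a b : ℝ) (ha0 : 0 ≤ a) (ha1 : a < 1) (hb : 0 ≤ b)
    (hbound : ∀ (f : H) (hf : f ∈ B.domain),
      ‖R ⟨f, hRdom hf⟩‖ ≤ a * ‖B ⟨f, hf⟩‖ + b * ‖f‖) :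
    ∃ Λ : ℝ, 0 < Λ ∧ ∀ l : ℝ, Λ ≤ l →
      HasBoundedInverseShifted (M (Complex.I * (l : ℂ))) 0 :=
  pencil_invertible_for_large_lambda_of_relative_bound_general B hBsa R hRdom B2 hB2 M hMdom hMval a
    b ha0 ha1 hb hbound
end

section
/- Let S : H ⊇ dom(S) → H' be a closable, injective linear operator whose inverse S^{-1} is bounded with closure(S^{-1}) ∈ B(H', H), and let T : H' ⊇ dom(T) → H'' be a linear operator such that the restriction of T to dom(T) ∩ ran(S) is closable and the restriction of T to dom(T) ∩ ran(closure(S)) is contained in the closure of the restriction of T to dom(T) ∩ ran(S). Assume further that TS is closable. Then T ∘ closure(S) ⊆ closure(TS), i.e., for every f ∈ dom(closure(S)) with closure(S)f ∈ dom(T), the pair (f, T(closure(S)f)) lies in the closure of the graph of TS. -/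
/-!
Since `S⁻¹` has a bounded extension `G`, the relation `G y = x` is closed and holds on the graph
of `S`, hence on the graph of `closure(S)`: `G` still inverts `closure(S)`. Now `(y, z) ↦ (G y, z)`
is continuous and maps the graph of `T|_{dom(T) ∩ ran(S)}` into the graph of `TS`, so it maps the
closure of the former into the closure of the latter. For `f ∈ dom(closure(S))` with
`closure(S) f ∈ dom(T)`, the pair `(closure(S) f, T(closure(S) f))` lies in the former closure by
hypothesis, and its image is `(f, T(closure(S) f))`.
-/

namespace LinearPMap

section Algebraic

variable {R E F : Type*} [CommRing R] [AddCommGroup E] [AddCommGroup F] [Module R E] [Module R F]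

theorem apply_eq_of_mem_graph {f : E →ₗ.[R] F} {x : f.domain} {y : F}
    (h : ((x : E), y) ∈ f.graph) : f x = y :=
  f.mem_graph_snd_inj (f.mem_graph x) h rfl

theorem mem_graph_domRestrict {f : E →ₗ.[R] F} {M : Submodule R E} {x : E} (hxM : x ∈ M)
    (hx : x ∈ f.domain) : (x, f ⟨x, hx⟩) ∈ (f.domRestrict M).graph :=
  (f.domRestrict M).mem_graph_iff.2 ⟨⟨x, hxM, hx⟩, rfl, domRestrict_apply rfl⟩

variable {F' : Type*} [AddCommGroup F'] [Module R F']

theorem mem_graph_comp_of_mem_graph_domRestrict_range {S : E →ₗ.[R] F} {T : F →ₗ.[R] F'}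
    {TS : E →ₗ.[R] F'}
    (hTS : ∀ (x : E) (z : F'), (x, z) ∈ TS.graph ↔
      ∃ (hx : x ∈ S.domain) (h2 : S ⟨x, hx⟩ ∈ T.domain), T ⟨S ⟨x, hx⟩, h2⟩ = z)
    {G : F → E} (hG : ∀ x : S.domain, G (S x) = x) {p : F × F'}
    (hp : p ∈ (T.domRestrict (LinearMap.range S.toFun)).graph) : (G p.1, p.2) ∈ TS.graph := by
  obtain ⟨y, z⟩ := p
  obtain ⟨⟨x, rfl⟩, hxT⟩ := mem_domain_of_mem_graph hp
  have hT : (S x, z) ∈ T.graph := le_graph_of_le domRestrict_le hp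
  change (G (S x), z) ∈ TS.graph
  rw [hG, hTS]
  exact ⟨x.2, hxT, apply_eq_of_mem_graph hT⟩

end Algebraic

section Topological

variable {R E F : Type*} [CommRing R] [AddCommGroup E] [AddCommGroup F] [Module R E] [Module R F]
  [TopologicalSpace E] [TopologicalSpace F] [ContinuousAdd E] [ContinuousAdd F]
  [TopologicalSpace R] [ContinuousSMul R E] [ContinuousSMul R F]

/-- For a non-closable `f`, `f.closure = f`, so the inclusion holds in every case. -/
theorem graph_closure_subset_closure_graph (f : E →ₗ.[R] F) :
    (f.closure.graph : Set (E × F)) ⊆ _root_.closure f.graph := by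
  by_cases hf : f.IsClosable
  · rw [← hf.graph_closure_eq_closure_graph, Submodule.topologicalClosure_coe]
  · rw [closure_def' hf]
    exact subset_closure

theorem graph_closure_subset_of_isClosed {f : E →ₗ.[R] F} {s : Set (E × F)}
    (hs : _root_.IsClosed s) (hf : (f.graph : Set (E × F)) ⊆ s) :
    (f.closure.graph : Set (E × F)) ⊆ s :=
  f.graph_closure_subset_closure_graph.trans (closure_minimal hf hs)

theorem apply_closure_of_leftInverse [T2Space E] {f : E →ₗ.[R] F} {G : F → E}
    (hG : Continuous G) (hGf : ∀ x : f.domain, G (f x) = x) (x : f.closure.domain) :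
    G (f.closure x) = x := by
  have hclosed : _root_.IsClosed {p : E × F | G p.2 = p.1} :=
    isClosed_eq (hG.comp continuous_snd) continuous_fst
  refine graph_closure_subset_of_isClosed hclosed ?_ (f.closure.mem_graph x)
  rintro ⟨y, z⟩ hyz
  obtain ⟨a, rfl, rfl⟩ := f.mem_graph_iff.1 hyz
  exact hGf a

end Topological

end LinearPMap

open LinearPMap in
theorem T_closureS_le_closure_TS_general
    {H H' H'' : Type*}
    [NormedAddCommGroup H] [InnerProductSpace ℂ H]
    [NormedAddCommGroup H'] [InnerProductSpace ℂ H']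
    [NormedAddCommGroup H''] [InnerProductSpace ℂ H'']
    (S : H →ₗ.[ℂ] H') (T : H' →ₗ.[ℂ] H'')
    (hSinv : ∃ G : H' →L[ℂ] H, ∀ x : S.domain, G (S x) = (x : H))
    -- `T|_{dom(T) ∩ ran(closure(S))} ⊆ closure(T|_{dom(T) ∩ ran(S)})`:
    (hTres : T.domRestrict (LinearMap.range S.closure.toFun) ≤
      (T.domRestrict (LinearMap.range S.toFun)).closure)
    -- `TS` (with its natural domain), assumed closable:
    (TS : H →ₗ.[ℂ] H'')
    (hTS : ∀ (x : H) (z : H''), (x, z) ∈ TS.graph ↔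
      ∃ (hx : x ∈ S.domain) (h2 : S ⟨x, hx⟩ ∈ T.domain), T ⟨S ⟨x, hx⟩, h2⟩ = z)
    (hTSclosable : TS.IsClosable) :
    ∀ (f : S.closure.domain) (hT : S.closure f ∈ T.domain),
      ((f : H), T ⟨S.closure f, hT⟩) ∈ TS.closure.graph := by
  obtain ⟨G, hG⟩ := hSinv
  intro f hT
  have hTr : (S.closure f, T ⟨S.closure f, hT⟩) ∈
      closure ((T.domRestrict (LinearMap.range S.toFun)).graph : Set (H' × H'')) :=
    graph_closure_subset_closure_graph _ <| le_graph_of_le hTres <|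
      mem_graph_domRestrict (LinearMap.mem_range_self _ f) hT
  have hmapped := map_mem_closure ((G.continuous.comp continuous_fst).prodMk continuous_snd) hTr
    fun _ hp => mem_graph_comp_of_mem_graph_domRestrict_range hTS hG hp
  rw [← hTSclosable.graph_closure_eq_closure_graph, ← SetLike.mem_coe,
    Submodule.topologicalClosure_coe]
  simpa only [Function.comp_apply, apply_closure_of_leftInverse G.continuous hG f] using hmapped

/-- Lemma B.2 (ii). Let `S : H ⊇ dom(S) → H'` be closable and injective
with bounded inverse whose closure lies in `B(H', H)`, and let `T : H' ⊇ dom(T) → H''` be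
such that `T` restricted to `dom(T) ∩ ran(S)` is closable and `T` restricted to
`dom(T) ∩ ran(closure(S))` is contained in the closure of the restriction of `T` to
`dom(T) ∩ ran(S)`.  Assume `TS` is closable.  Then `T ∘ closure(S) ⊆ closure(TS)`: for every
`f ∈ dom(closure(S))` with `closure(S) f ∈ dom(T)`, the pair `(f, T(closure(S) f))` lies in
the graph of `closure(TS)`. -/
theorem T_closureS_le_closure_TS
    {H H' H'' : Type*}
    [NormedAddCommGroup H] [InnerProductSpace ℂ H] [CompleteSpace H]
    [TopologicalSpace.SeparableSpace H]
    [NormedAddCommGroup H'] [InnerProductSpace ℂ H'] [CompleteSpace H']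
    [TopologicalSpace.SeparableSpace H']
    [NormedAddCommGroup H''] [InnerProductSpace ℂ H''] [CompleteSpace H'']
    [TopologicalSpace.SeparableSpace H'']
    (S : H →ₗ.[ℂ] H') (T : H' →ₗ.[ℂ] H'')
    -- `S` is closable and injective, and `closure(S⁻¹) ∈ B(H', H)`:
    (hSclosable : S.IsClosable)
    (hSinj : ∀ x : S.domain, S x = 0 → (x : H) = 0)
    (hSinv : ∃ G : H' →L[ℂ] H, ∀ x : S.domain, G (S x) = (x : H))
    -- `T|_{dom(T) ∩ ran(S)}` is closable:
    (hTresClosable : (T.domRestrict (LinearMap.range S.toFun)).IsClosable)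
    -- `T|_{dom(T) ∩ ran(closure(S))} ⊆ closure(T|_{dom(T) ∩ ran(S)})`:
    (hTres : T.domRestrict (LinearMap.range S.closure.toFun) ≤
      (T.domRestrict (LinearMap.range S.toFun)).closure)
    -- `TS` (with its natural domain), assumed closable:
    (TS : H →ₗ.[ℂ] H'')
    (hTS : ∀ (x : H) (z : H''), (x, z) ∈ TS.graph ↔
      ∃ (hx : x ∈ S.domain) (h2 : S ⟨x, hx⟩ ∈ T.domain), T ⟨S ⟨x, hx⟩, h2⟩ = z)
    (hTSclosable : TS.IsClosable) :
    ∀ (f : S.closure.domain) (hT : S.closure f ∈ T.domain),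
      ((f : H), T ⟨S.closure f, hT⟩) ∈ TS.closure.graph :=
  T_closureS_le_closure_TS_general S T hSinv hTres TS hTS hTSclosable
end
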